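/- If n ≥ 3 is odd and k ≥ 3, then the metric dimension of the Cartesian product C_n □ P_k is 2. -/

import Mathlib

open SimpleGraph
open Fin.NatCast Fin.CommRing

/-- `Q` is a resolving set of `G`: distinct vertices have distinct distance vectors to `Q`. -/
def IsResolving {V : Type*} (G : SimpleGraph V) (Q : Finset V) : Prop :=
  ∀ x y : V, (∀ q ∈ Q, G.dist x q = G.dist y q) → x = y

/-- `Q` is a doubly resolving set of `G`. -/
def IsDoublyResolving {V : Type*} (G : SimpleGraph V) (Q : Finset V) : Prop :=
  ∀ x y : V, x ≠ y → ∃ u ∈ Q, ∃ v ∈ Q,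
    (G.dist x u : ℤ) - (G.dist x v : ℤ) ≠ (G.dist y u : ℤ) - (G.dist y v : ℤ)

/-- `Q` is a strong resolving set of `G`: for distinct `p q` some `r ∈ Q` has
`p` on a shortest `q`–`r` path or `q` on a shortest `p`–`r` path. -/
def IsStrongResolving {V : Type*} (G : SimpleGraph V) (Q : Finset V) : Prop :=
  ∀ p q : V, p ≠ q → ∃ r ∈ Q,
    G.dist q r = G.dist q p + G.dist p r ∨ G.dist p r = G.dist p q + G.dist q r

section Aux

lemma walk_abs_bound {V : Type*} {G : SimpleGraph V} (φ : V → ℤ)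
    (hφ : ∀ u v : V, G.Adj u v → |φ u - φ v| ≤ 1) :
    ∀ {u v : V} (p : G.Walk u v), |φ u - φ v| ≤ (p.length : ℤ) := by
  intro u v p
  induction p with
  | nil => simp
  | @cons a b c h q ih =>
      have h1 := hφ a b h
      have hl : ((Walk.cons h q).length : ℤ) = (q.length : ℤ) + 1 := by
        rw [Walk.length_cons]; push_cast; ring
      calc |φ a - φ c| ≤ |φ a - φ b| + |φ b - φ c| := abs_sub_le _ _ _
        _ ≤ 1 + (q.length : ℤ) := add_le_add h1 ih
        _ = ((Walk.cons h q).length : ℤ) := by rw [hl]; ring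

lemma path_dist_le {k : ℕ} : ∀ (d : ℕ) (u v : Fin k), u.val + d = v.val →
    (pathGraph k).dist u v ≤ d := by
  intro d
  induction d with
  | zero =>
      intro u v h
      have : u = v := Fin.ext (by omega)
      subst this; simp
  | succ d ih =>
      intro u v h
      have hk1 : u.val + 1 < k := by have := v.isLt; omega
      set u' : Fin k := ⟨u.val + 1, hk1⟩ with hu'
      have hadj : (pathGraph k).Adj u u' := by rw [pathGraph_adj]; left; rfl
      have hconn : (pathGraph k).Connected := by
        obtain ⟨k', rfl⟩ : ∃ k', k = k' + 1 := ⟨k - 1, by omega⟩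
        exact pathGraph_connected _
      have h1 : (pathGraph k).dist u u' = 1 := dist_eq_one_iff_adj.mpr hadj
      have h2 : (pathGraph k).dist u' v ≤ d := ih u' v (by simp [hu']; omega)
      calc (pathGraph k).dist u v ≤ (pathGraph k).dist u u' + (pathGraph k).dist u' v :=
            hconn.dist_triangle
        _ ≤ 1 + d := by omega
        _ = d + 1 := by ring

lemma path_dist_eq {k : ℕ} (u v : Fin k) (h : u.val ≤ v.val) :
    (pathGraph k).dist u v = v.val - u.val := by
  refine le_antisymm (path_dist_le _ u v (by omega)) ?_
  have hconn : (pathGraph k).Connected := by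
    obtain ⟨k', rfl⟩ : ∃ k', k = k' + 1 := ⟨k - 1, by have := u.pos; omega⟩
    exact pathGraph_connected _
  obtain ⟨p, hp⟩ := (hconn.preconnected u v).exists_walk_length_eq_dist
  have hb := walk_abs_bound (fun w : Fin k => (w.val : ℤ)) ?_ p
  · rw [hp] at hb
    have hb2 := abs_le.mp hb
    omega
  · intro a b hab
    rw [pathGraph_adj] at hab
    rw [abs_le]
    omega

lemma fin_sub_val {n : ℕ} (u v : Fin n) :
    (u - v).val = if v.val ≤ u.val then u.val - v.val else n + u.val - v.val := by
  have hu := u.isLt; have hv := v.isLt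
  have h0 : (u - v).val = (n - v.val + u.val) % n := by rw [Fin.sub_def]
  rcases le_or_gt v.val u.val with h | h
  · have he : n - v.val + u.val = (u.val - v.val) + n := by omega
    rw [h0, he, Nat.add_mod_right, Nat.mod_eq_of_lt (by omega)]
    simp [h]
  · have hlt : n - v.val + u.val < n := by omega
    rw [h0, Nat.mod_eq_of_lt hlt]
    split_ifs with hh
    · omega
    · omega

lemma fin_sub_modeq {n : ℕ} (u v : Fin n) :
    ((u - v).val : ℤ) ≡ (u.val : ℤ) - v.val [ZMOD n] := by
  have hv := v.isLt
  have h0 : (u - v).val = (n - v.val + u.val) % n := by rw [Fin.sub_def]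
  have h1 : ((u - v).val : ℤ) = ((n - v.val + u.val : ℕ) : ℤ) % (n : ℤ) := by
    rw [h0]; push_cast; ring
  have h2 : ((n - v.val + u.val : ℕ) : ℤ) % (n : ℤ) ≡ ((n - v.val + u.val : ℕ) : ℤ) [ZMOD n] :=
    Int.emod_emod_of_dvd _ dvd_rfl
  have h3 : ((n - v.val + u.val : ℕ) : ℤ) ≡ (u.val : ℤ) - v.val [ZMOD n] := by
    refine Int.modEq_iff_dvd.mpr ⟨-1, ?_⟩
    push_cast [Nat.cast_sub hv.le]
    ring
  rw [h1]
  exact h2.trans h3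

lemma cycle_walk_bound {n : ℕ} : ∀ {u v : Fin n} (p : (cycleGraph n).Walk u v),
    ∃ s : ℤ, |s| ≤ (p.length : ℤ) ∧ (u.val : ℤ) - v.val ≡ s [ZMOD n] := by
  intro u v p
  induction p with
  | nil => exact ⟨0, by simp, by simp⟩
  | @cons a b c h q ih =>
      obtain ⟨s, hs1, hs2⟩ := ih
      rw [cycleGraph_adj'] at h
      have hl : ((Walk.cons (by rwa [cycleGraph_adj']) q).length : ℤ) = (q.length : ℤ) + 1 := by
        rw [Walk.length_cons]; push_cast; ring
      rcases h with h | h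
      · refine ⟨s + 1, ?_, ?_⟩
        · calc |s + 1| ≤ |s| + |(1:ℤ)| := abs_add_le _ _
            _ ≤ (q.length : ℤ) + 1 := by simpa using add_le_add_right hs1 1
            _ = _ := by rw [Walk.length_cons]; push_cast; ring
        · have hab : ((a - b).val : ℤ) ≡ (a.val : ℤ) - b.val [ZMOD n] := fin_sub_modeq a b
          rw [h] at hab
          push_cast at hab
          have hsum := hab.symm.add hs2
          have hc : (a.val : ℤ) - c.val = ((a.val : ℤ) - b.val) + ((b.val : ℤ) - c.val) := by ring
          rw [hc, show s + 1 = 1 + s by ring]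
          exact hab.symm.add hs2
      · refine ⟨s - 1, ?_, ?_⟩
        · calc |s - 1| ≤ |s| + |(-1:ℤ)| := by simpa [sub_eq_add_neg] using abs_add_le s (-1)
            _ ≤ (q.length : ℤ) + 1 := by simpa using add_le_add_right hs1 1
            _ = _ := by rw [Walk.length_cons]; push_cast; ring
        · have hab : ((b - a).val : ℤ) ≡ (b.val : ℤ) - a.val [ZMOD n] := fin_sub_modeq b a
          rw [h] at hab
          push_cast at hab
          have hab' : ((a.val : ℤ) - b.val) ≡ (-1 : ℤ) [ZMOD n] := by
            have := hab.neg
            simpa [neg_sub] using this.symm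
          have hc : (a.val : ℤ) - c.val = ((a.val : ℤ) - b.val) + ((b.val : ℤ) - c.val) := by ring
          rw [hc, show s - 1 = -1 + s by ring]
          exact hab'.add hs2

lemma cycle_connected' {n : ℕ} (hn : 1 ≤ n) : (cycleGraph n).Connected := by
  obtain ⟨m, rfl⟩ : ∃ m, n = m + 1 := ⟨n - 1, by omega⟩
  exact cycleGraph_connected

lemma cycle_step {n : ℕ} [NeZero n] (hn : 2 ≤ n) (a : Fin n) : ∀ l : ℕ,
    (cycleGraph n).dist a (a + (l : Fin n)) ≤ l := by
  have hone : ((1 : Fin n)).val = 1 := by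
    rw [Fin.val_one']; exact Nat.mod_eq_of_lt (by omega)
  have hconn := cycle_connected' (by omega : 1 ≤ n)
  intro l
  induction l with
  | zero => simp
  | succ l ih =>
      have hcast : ((l + 1 : ℕ) : Fin n) = (l : Fin n) + 1 := by push_cast; ring
      have hadj : (cycleGraph n).Adj (a + (l : Fin n)) (a + (l : Fin n) + 1) := by
        rw [cycleGraph_adj']; right
        have he : (a + (l : Fin n) + 1) - (a + (l : Fin n)) = 1 := by ring
        rw [he, hone]
      have h1 : (cycleGraph n).dist (a + (l : Fin n)) (a + (l : Fin n) + 1) = 1 :=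
        dist_eq_one_iff_adj.mpr hadj
      have h2 := hconn.dist_triangle (v := a + (l : Fin n))
        (u := a) (w := a + (l : Fin n) + 1)
      rw [hcast, ← add_assoc]
      omega

lemma cycle_dist_le' {n : ℕ} (hn : 2 ≤ n) (a b : Fin n) :
    (cycleGraph n).dist a b ≤ (b - a).val := by
  haveI : NeZero n := ⟨by omega⟩
  have := cycle_step hn a (b - a).val
  rwa [Fin.cast_val_eq_self, add_sub_cancel] at this

lemma cycle_dist {n : ℕ} (hn : 2 ≤ n) (u v : Fin n) :
    (cycleGraph n).dist u v = min (u - v).val (v - u).val := by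
  haveI : NeZero n := ⟨by omega⟩
  have hconn := cycle_connected' (by omega : 1 ≤ n)
  refine le_antisymm (le_min ?_ ?_) ?_
  · rw [dist_comm]; exact cycle_dist_le' hn v u
  · exact cycle_dist_le' hn u v
  · obtain ⟨p, hp⟩ := (hconn.preconnected u v).exists_walk_length_eq_dist
    obtain ⟨s, hs1, hs2⟩ := cycle_walk_bound p
    rw [hp] at hs1
    have habs := abs_le.mp hs1
    have h3 : ((u - v).val : ℤ) ≡ s [ZMOD n] := (fin_sub_modeq u v).trans hs2
    have h4 : (n : ℤ) ∣ s - ((u - v).val : ℤ) := Int.ModEq.dvd h3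
    have hd := fin_sub_val u v
    have he := fin_sub_val v u
    have hu := u.isLt; have hv := v.isLt
    by_contra hlt
    push_neg at hlt
    -- d := (u-v).val, e := (v-u).val ; dist < min d e
    have hmin : (cycleGraph n).dist u v < (u - v).val ∧
        (cycleGraph n).dist u v < (v - u).val := by
      constructor <;> omega
    have h5 : (0 : ℤ) < ((u - v).val : ℤ) - s := by
      have := hmin.1; omega
    have h6 : ((u - v).val : ℤ) - s < n := by
      have h7 : (v - u).val = n - (u - v).val := by
        split_ifs at hd he <;> omega
      have := hmin.2
      omega
    have h8 : (n : ℤ) ∣ ((u - v).val : ℤ) - s := by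
      have := dvd_neg.mpr h4
      simpa using this
    have := Int.le_of_dvd h5 h8
    omega

lemma boxProd_walk_ge {α β : Type*} {G : SimpleGraph α} {H : SimpleGraph β}
    (hG : G.Connected) (hH : H.Connected) :
    ∀ {x y : α × β} (p : (G □ H).Walk x y),
      G.dist x.1 y.1 + H.dist x.2 y.2 ≤ p.length := by
  intro x y p
  induction p with
  | nil => simp
  | @cons a b c h q ih =>
      rw [boxProd_adj] at h
      rw [Walk.length_cons]
      rcases h with ⟨h1, h2⟩ | ⟨h1, h2⟩
      · have t1 : G.dist a.1 c.1 ≤ 1 + G.dist b.1 c.1 := by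
          have := hG.dist_triangle (u := a.1) (v := b.1) (w := c.1)
          rw [dist_eq_one_iff_adj.mpr h1] at this
          omega
        have t2 : H.dist a.2 c.2 = H.dist b.2 c.2 := by rw [h2]
        omega
      · have t1 : H.dist a.2 c.2 ≤ 1 + H.dist b.2 c.2 := by
          have := hH.dist_triangle (u := a.2) (v := b.2) (w := c.2)
          rw [dist_eq_one_iff_adj.mpr h1] at this
          omega
        have t2 : G.dist a.1 c.1 = G.dist b.1 c.1 := by rw [h2]
        omega

lemma boxProd_dist {α β : Type*} {G : SimpleGraph α} {H : SimpleGraph β}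
    (hG : G.Connected) (hH : H.Connected) (x y : α × β) :
    (G □ H).dist x y = G.dist x.1 y.1 + H.dist x.2 y.2 := by
  obtain ⟨x1, x2⟩ := x
  obtain ⟨y1, y2⟩ := y
  refine le_antisymm ?_ ?_
  · obtain ⟨p, hp⟩ := (hG.preconnected x1 y1).exists_walk_length_eq_dist
    obtain ⟨q, hq⟩ := (hH.preconnected x2 y2).exists_walk_length_eq_dist
    have hle := SimpleGraph.dist_le ((p.boxProdLeft H x2).append (q.boxProdRight G y1))
    have e1 : (p.boxProdLeft H x2).length = p.length := Walk.length_map _ _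
    have e2 : (q.boxProdRight G y1).length = q.length := Walk.length_map _ _
    rwa [Walk.length_append, e1, e2, hp, hq] at hle
  · obtain ⟨p, hp⟩ := ((hG.boxProd hH).preconnected (x1, x2) (y1, y2)).exists_walk_length_eq_dist
    rw [← hp]
    exact boxProd_walk_ge hG hH p

lemma cycle_dist_zero {n : ℕ} [NeZero n] (hn : 2 ≤ n) (u : Fin n) :
    (cycleGraph n).dist u (0 : Fin n) = min u.val (n - u.val) := by
  rw [cycle_dist hn, fin_sub_val, fin_sub_val]
  simp only [Fin.val_zero]
  have := u.isLt
  simp only [Nat.zero_le, ↓reduceIte, Nat.sub_zero, Nat.add_zero, Nat.le_zero]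
  split_ifs <;> omega

lemma cycle_dist_mid {n M : ℕ} (hn : 2 ≤ n) (hM : M < n) (u : Fin n) :
    (cycleGraph n).dist u ⟨M, hM⟩ =
      if M ≤ u.val then min (u.val - M) (n + M - u.val) else min (n + u.val - M) (M - u.val) := by
  rw [cycle_dist hn, fin_sub_val, fin_sub_val]
  have hmk : (⟨M, hM⟩ : Fin n).val = M := rfl
  rw [hmk]
  have := u.isLt
  split_ifs <;> omega

end Aux

set_option maxHeartbeats 1000000 in
theorem stmt5 (n k : ℕ) (hn : 3 ≤ n) (ho : Odd n) (hk : 3 ≤ k) :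
    IsLeast {m : ℕ | ∃ Q, IsResolving (cycleGraph n □ pathGraph k) Q ∧ Q.card = m} (2) := by
  haveI : NeZero n := ⟨by omega⟩
  haveI : NeZero k := ⟨by omega⟩
  obtain ⟨M, hM⟩ := ho
  have hGc : (cycleGraph n).Connected := cycle_connected' (by omega)
  have hHc : (pathGraph k).Connected := by
    obtain ⟨k', rfl⟩ : ∃ k', k = k' + 1 := ⟨k - 1, by omega⟩
    exact pathGraph_connected _
  have hD := boxProd_dist hGc hHc
  have hP0 : ∀ b : Fin k, (pathGraph k).dist b (0 : Fin k) = b.val := by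
    intro b
    rw [dist_comm, path_dist_eq (0 : Fin k) b (by simp)]
    simp
  have hone : ((1 : Fin n)).val = 1 := by rw [Fin.val_one']; exact Nat.mod_eq_of_lt (by omega)
  constructor
  · -- 2 is attained
    set m : Fin n := (⟨M, by omega⟩ : Fin n) with hm
    have hmval : m.val = M := rfl
    refine ⟨{((0 : Fin n), (0 : Fin k)), (m, (0 : Fin k))}, ?_, ?_⟩
    · intro x y hxy
      obtain ⟨x1, x2⟩ := x
      obtain ⟨y1, y2⟩ := y
      have h1 := hxy ((0 : Fin n), (0 : Fin k)) (by simp)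
      have h2 := hxy (m, (0 : Fin k)) (by simp)
      rw [hD, hD] at h1 h2
      simp only at h1 h2
      rw [hP0 x2, hP0 y2, cycle_dist_zero (by omega : 2 ≤ n), cycle_dist_zero (by omega : 2 ≤ n)]
        at h1
      rw [hP0 x2, hP0 y2, cycle_dist_mid (by omega : 2 ≤ n) (by omega : M < n),
        cycle_dist_mid (by omega : 2 ≤ n) (by omega : M < n)] at h2
      have hx1 := x1.isLt; have hy1 := y1.isLt
      have hx2 := x2.isLt; have hy2 := y2.isLt
      have hvals : x1.val = y1.val ∧ x2.val = y2.val := by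
        split_ifs at h2 <;> omega
      exact Prod.ext (Fin.ext hvals.1) (Fin.ext hvals.2)
    · refine Finset.card_pair ?_
      intro hcontra
      have : (0 : Fin n) = m := congrArg Prod.fst hcontra
      have hval : (0 : Fin n).val = M := by rw [this]
      simp only [Fin.val_zero] at hval
      omega
  · -- lower bound
    rintro m' ⟨Q, hQ, hcard⟩
    by_contra hlt
    push_neg at hlt
    interval_cases m'
    · -- empty
      rw [Finset.card_eq_zero] at hcard
      subst hcard
      have := hQ ((0 : Fin n), (0 : Fin k)) ((1 : Fin n), (0 : Fin k)) (by simp)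
      have h01 : (0 : Fin n) = 1 := congrArg Prod.fst this
      have : (0 : Fin n).val = (1 : Fin n).val := by rw [h01]
      rw [hone] at this
      simp at this
    · -- singleton
      rw [Finset.card_eq_one] at hcard
      obtain ⟨q, rfl⟩ := hcard
      obtain ⟨a, b⟩ := q
      have hnegone : ((-1 : Fin n)).val = n - 1 := by
        have h1 : (-1 : Fin n) = 0 - 1 := by ring
        rw [h1, fin_sub_val]
        simp only [Fin.val_zero, hone]
        have : ¬ (1 ≤ 0) := by omega
        simp [this]
      have key : ∀ c : Fin n, (c - a).val = 1 ∨ (a - c).val = 1 →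
          (cycleGraph n □ pathGraph k).dist (c, b) (a, b) = 1 := by
        intro c hc
        rw [hD]
        simp only
        rw [SimpleGraph.dist_self, cycle_dist (by omega : 2 ≤ n)]
        have h1 := fin_sub_val c a
        have h2 := fin_sub_val a c
        have hca := c.isLt; have haa := a.isLt
        rcases hc with hc | hc
        · rw [hc] at h1 ⊢
          split_ifs at h1 h2 <;> omega
        · rw [hc] at h2 ⊢
          split_ifs at h1 h2 <;> omega
      have had1 : ((a + 1) - a) = (1 : Fin n) := by ring
      have had2 : (a - (a - 1)) = (1 : Fin n) := by ring
      have e1 := key (a + 1) (Or.inl (by rw [had1, hone]))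
      have e2 := key (a - 1) (Or.inr (by rw [had2, hone]))
      have heq := hQ ((a + 1 : Fin n), b) ((a - 1 : Fin n), b) (by
        intro q hq
        simp only [Finset.mem_singleton] at hq
        subst hq
        rw [e1, e2])
      have hfst : (a + 1 : Fin n) = a - 1 := congrArg Prod.fst heq
      have h2 : (2 : Fin n) = 0 := by
        have := sub_eq_zero.mpr hfst
        rw [← this]; ring
      have hv2 : ((2 : Fin n)).val = 2 := by
        have : ((2 : ℕ) : Fin n) = (2 : Fin n) := by push_cast; ring
        rw [← this, Fin.val_cast_of_lt (by omega)]
      rw [h2] at hv2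
      simp at hv2
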